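/- arXiv:1310.7435 — 7 statements merged into one kernel-verified Lean document; each statement's English description precedes it below -/
import Mathlib

section
/- For any finite signed measure m on ℝ and any z ∈ ℂ∖ℝ, one has ∫_{λ∈ℝ} m((−∞,λ])/(z−λ)² dλ = −∫_{λ∈ℝ} 1/(z−λ) dm(λ). -/
/-!
Write `m((−∞,λ]) = ∫ 1_{t ≤ λ} dm(t)` for each part of the Jordan decomposition and swap the
order of integration (Fubini, `m` being finite and `(z − λ)⁻²` Lebesgue integrable). The inner
integral becomes `∫_t^∞ (z − λ)⁻² dλ = −(z − t)⁻¹`, since `(z − λ)⁻¹` is an antiderivative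
vanishing at infinity.
-/

open MeasureTheory Filter Set

namespace Complex

variable {z : ℂ}

lemma sub_ofReal_ne_zero_of_im_ne_zero (hz : z.im ≠ 0) (l : ℝ) : z - l ≠ 0 := fun h ↦
  hz (by simpa using congrArg im h)

lemma continuous_inv_sub_ofReal_sq (hz : z.im ≠ 0) :
    Continuous fun l : ℝ ↦ ((z - l) ^ 2)⁻¹ :=
  .inv₀ (by fun_prop) fun l ↦ pow_ne_zero 2 (sub_ofReal_ne_zero_of_im_ne_zero hz l)

lemma norm_inv_sub_ofReal_sq (l : ℝ) :
    ‖((z - l) ^ 2)⁻¹‖ = ((l - z.re) ^ 2 + z.im ^ 2)⁻¹ := by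
  rw [norm_inv, norm_pow, Complex.sq_norm, normSq_apply]
  simp only [sub_re, ofReal_re, sub_im, ofReal_im, sub_zero]
  ring

lemma integrable_inv_sub_ofReal_sq (hz : z.im ≠ 0) :
    Integrable fun l : ℝ ↦ ((z - l) ^ 2)⁻¹ := by
  refine (integrable_norm_iff (continuous_inv_sub_ofReal_sq hz).aestronglyMeasurable).1 ?_
  have hscale (l : ℝ) : ((l - z.re) ^ 2 + z.im ^ 2)⁻¹ =
      (z.im ^ 2)⁻¹ * (1 + ((l - z.re) / z.im) ^ 2)⁻¹ := by
    field_simp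
    ring
  simp_rw [norm_inv_sub_ofReal_sq, hscale]
  exact ((integrable_inv_one_add_sq.comp_div hz).comp_sub_right z.re).const_mul _

lemma hasDerivAt_inv_sub_ofReal (hz : z.im ≠ 0) (l : ℝ) :
    HasDerivAt (fun l : ℝ ↦ (z - l)⁻¹) ((z - l) ^ 2)⁻¹ l := by
  simpa using
    (((hasDerivAt_id (l : ℂ)).const_sub z).inv (sub_ofReal_ne_zero_of_im_ne_zero hz l)).comp_ofReal

lemma tendsto_inv_sub_ofReal_atTop :
    Tendsto (fun l : ℝ ↦ (z - l)⁻¹) atTop (nhds 0) :=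
  tendsto_inv₀_cobounded.comp <|
    (tendsto_const_sub_cobounded z).comp (RCLike.tendsto_ofReal_atTop_cobounded ℂ)

lemma integral_Ioi_inv_sub_ofReal_sq (hz : z.im ≠ 0) (t : ℝ) :
    ∫ l in Ioi t, ((z - l) ^ 2)⁻¹ = -(z - t)⁻¹ := by
  rw [integral_Ioi_of_hasDerivAt_of_tendsto (f := fun l : ℝ ↦ (z - l)⁻¹)
    (hasDerivAt_inv_sub_ofReal hz t).continuousAt.continuousWithinAt
    (fun l _ ↦ hasDerivAt_inv_sub_ofReal hz l) (integrable_inv_sub_ofReal_sq hz).integrableOn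
    tendsto_inv_sub_ofReal_atTop, zero_sub]

end Complex

section LayerCake

variable {E : Type*} [NormedAddCommGroup E] {ν : Measure ℝ} {g : ℝ → E}

lemma integrable_indicator_le_comp_fst (μ : Measure ℝ) [IsFiniteMeasure μ] (hg : Integrable g ν) :
    Integrable ({p : ℝ × ℝ | p.2 ≤ p.1}.indicator (g ·.1)) (ν.prod μ) :=
  (hg.comp_fst μ).indicator (measurableSet_le measurable_snd measurable_fst)

variable [NormedSpace ℝ E] [CompleteSpace E]

lemma integral_indicator_le_comp_fst (μ : Measure ℝ) (l : ℝ) :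
    ∫ t, {p : ℝ × ℝ | p.2 ≤ p.1}.indicator (g ·.1) (l, t) ∂μ = μ.real (Iic l) • g l := by
  rw [← integral_indicator_const _ measurableSet_Iic]
  rfl

lemma integrable_measureReal_Iic_smul (μ : Measure ℝ) [IsFiniteMeasure μ] (hg : Integrable g ν) :
    Integrable (fun l ↦ μ.real (Iic l) • g l) ν := by
  simpa only [integral_indicator_le_comp_fst] using
    (integrable_indicator_le_comp_fst μ hg).integral_prod_left

lemma integral_measureReal_Iic_smul [SFinite ν] (μ : Measure ℝ) [IsFiniteMeasure μ]
    (hg : Integrable g ν) :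
    ∫ l, μ.real (Iic l) • g l ∂ν = ∫ t, ∫ l in Ici t, g l ∂ν ∂μ := by
  simp_rw [← integral_indicator_le_comp_fst μ, ← integral_indicator measurableSet_Ici]
  exact integral_integral_swap (f := fun l t ↦ {p : ℝ × ℝ | p.2 ≤ p.1}.indicator (g ·.1) (l, t))
    (integrable_indicator_le_comp_fst μ hg)

end LayerCake

/-- For a finite signed measure `m` on `ℝ` and non-real `z`,
`∫_ℝ m((−∞,λ])/(z−λ)² dλ = −∫_ℝ 1/(z−λ) dm(λ)`, where the integral against `m` is
understood via the Jordan decomposition `m = m⁺ − m⁻`. -/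
theorem integral_cdf_eq_neg_stieltjes
    (m : SignedMeasure ℝ) (z : ℂ) (hz : z.im ≠ 0) :
    (∫ l : ℝ, ((m (Set.Iic l) : ℝ) : ℂ) / (z - (l : ℂ)) ^ 2)
      = - ((∫ l : ℝ, 1 / (z - (l : ℂ)) ∂m.toJordanDecomposition.posPart)
          - ∫ l : ℝ, 1 / (z - (l : ℂ)) ∂m.toJordanDecomposition.negPart) := by
  set μ := m.toJordanDecomposition.posPart
  set ν := m.toJordanDecomposition.negPart
  have hsplit (l : ℝ) : ((m (Iic l) : ℝ) : ℂ) / (z - l) ^ 2 =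
      μ.real (Iic l) • ((z - l) ^ 2)⁻¹ - ν.real (Iic l) • ((z - l) ^ 2)⁻¹ := by
    rw [m.apply_eq_posPart_real_sub_negPart_real measurableSet_Iic, ← sub_smul, Complex.real_smul,
      div_eq_mul_inv]
  have hg := Complex.integrable_inv_sub_ofReal_sq hz
  simp_rw [hsplit]
  rw [integral_sub (integrable_measureReal_Iic_smul μ hg) (integrable_measureReal_Iic_smul ν hg),
    integral_measureReal_Iic_smul μ hg, integral_measureReal_Iic_smul ν hg]
  simp_rw [integral_Ici_eq_integral_Ioi, Complex.integral_Ioi_inv_sub_ofReal_sq hz, integral_neg,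
    one_div]
  ring
end

section
/- There exists a universal constant R > 0 with the following property: for every n ≥ 1 and all complex numbers u₁, …, uₙ, setting P := ∏_{i=1}^n (1 + u_i/n), S := (1/n) ∑_{i=1}^n u_i and M := max_i |u_i|, if M/n ≤ R then |P − e^S| ≤ (M²/n) · e^{|S| + M²/n}. -/
/-!
Write `∏ (1 + zᵢ) = exp (∑ log (1 + zᵢ))` with `zᵢ = uᵢ/n`. Since `‖zᵢ‖ ≤ M/n` is small,
`log (1 + zᵢ) = zᵢ + O(‖zᵢ‖²)`, so the exponent is `S + D` with `‖D‖ ≤ n (M/n)² = M²/n`,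
and then `‖exp (S + D) - exp S‖ = ‖exp S‖ ‖exp D - 1‖ ≤ e^{‖S‖} ‖D‖ e^{‖D‖}`.
-/

open Finset

namespace Complex

lemma norm_exp_sub_one_le_norm_mul_exp (w : ℂ) : ‖exp w - 1‖ ≤ ‖w‖ * Real.exp ‖w‖ := by
  simpa using norm_exp_sub_sum_le_norm_mul_exp w 1

lemma norm_log_one_add_sub_self_le_sq {z : ℂ} (hz : ‖z‖ ≤ 1 / 2) :
    ‖log (1 + z) - z‖ ≤ ‖z‖ ^ 2 := by
  have hinv : (1 - ‖z‖)⁻¹ ≤ 2 := by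
    rw [inv_le_comm₀ (by linarith) two_pos]
    linarith
  calc ‖log (1 + z) - z‖ ≤ ‖z‖ ^ 2 * (1 - ‖z‖)⁻¹ / 2 :=
        norm_log_one_add_sub_self_le (hz.trans_lt one_half_lt_one)
    _ ≤ ‖z‖ ^ 2 * 2 / 2 := by gcongr
    _ = ‖z‖ ^ 2 := by ring

lemma norm_sum_log_one_add_sub_sum_le {ι : Type*} (s : Finset ι) {z : ι → ℂ} {δ : ℝ}
    (hδ : δ ≤ 1 / 2) (hz : ∀ i ∈ s, ‖z i‖ ≤ δ) :
    ‖∑ i ∈ s, log (1 + z i) - ∑ i ∈ s, z i‖ ≤ #s * δ ^ 2 := by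
  rw [← sum_sub_distrib]
  calc ‖∑ i ∈ s, (log (1 + z i) - z i)‖ ≤ ∑ i ∈ s, ‖log (1 + z i) - z i‖ := norm_sum_le _ _
    _ ≤ ∑ _i ∈ s, δ ^ 2 := by
        refine sum_le_sum fun i hi => (norm_log_one_add_sub_self_le_sq
          ((hz i hi).trans hδ)).trans ?_
        gcongr
        exact hz i hi
    _ = #s * δ ^ 2 := by rw [sum_const, nsmul_eq_mul]

lemma prod_one_add_eq_exp_sum_log {ι : Type*} (s : Finset ι) {z : ι → ℂ}
    (hz : ∀ i ∈ s, ‖z i‖ < 1) : ∏ i ∈ s, (1 + z i) = exp (∑ i ∈ s, log (1 + z i)) := by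
  rw [exp_sum]
  refine prod_congr rfl fun i hi => (exp_log fun h => ?_).symm
  have : z i = -1 := by linear_combination h
  simpa [this] using hz i hi

theorem norm_prod_one_add_sub_exp_sum_le {ι : Type*} (s : Finset ι) {z : ι → ℂ} {δ : ℝ}
    (hδ : δ ≤ 1 / 2) (hz : ∀ i ∈ s, ‖z i‖ ≤ δ) :
    ‖∏ i ∈ s, (1 + z i) - exp (∑ i ∈ s, z i)‖
      ≤ #s * δ ^ 2 * Real.exp (‖∑ i ∈ s, z i‖ + #s * δ ^ 2) := by
  set S := ∑ i ∈ s, z i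
  set D := ∑ i ∈ s, log (1 + z i) - S
  have hD : ‖D‖ ≤ #s * δ ^ 2 := norm_sum_log_one_add_sub_sum_le s hδ hz
  have hprod : ∏ i ∈ s, (1 + z i) - exp S = exp S * (exp D - 1) := by
    rw [prod_one_add_eq_exp_sum_log s fun i hi => (hz i hi).trans_lt (hδ.trans_lt one_half_lt_one),
      mul_sub, mul_one, ← exp_add, add_sub_cancel]
  calc ‖∏ i ∈ s, (1 + z i) - exp S‖ = ‖exp S‖ * ‖exp D - 1‖ := by rw [hprod, norm_mul]
    _ ≤ Real.exp ‖S‖ * (‖D‖ * Real.exp ‖D‖) := by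
        gcongr
        · exact norm_exp_le_exp_norm S
        · exact norm_exp_sub_one_le_norm_mul_exp D
    _ ≤ Real.exp ‖S‖ * (#s * δ ^ 2 * Real.exp (#s * δ ^ 2)) := by gcongr
    _ = #s * δ ^ 2 * Real.exp (‖S‖ + #s * δ ^ 2) := by rw [Real.exp_add]; ring

end Complex

/-- There is a universal constant `R > 0` such that for all `n ≥ 1` and complex numbers
`u₁, …, uₙ`, with `P = ∏ (1 + uᵢ/n)`, `S = (1/n) ∑ uᵢ` and `M = maxᵢ |uᵢ|`,
if `M/n ≤ R` then `|P − e^S| ≤ (M²/n)·e^{|S| + M²/n}`. -/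
theorem large_products_exponential :
    ∃ R : ℝ, 0 < R ∧
      ∀ (n : ℕ), 0 < n → ∀ (u : Fin n → ℂ) (M : ℝ),
        (∀ i, ‖(u i)‖ ≤ M) → (∃ i, ‖(u i)‖ = M) →
        M / n ≤ R →
        ‖((∏ i, (1 + u i / n)) - Complex.exp ((1 / n : ℂ) * ∑ i, u i))‖
          ≤ M ^ 2 / n * Real.exp (‖((1 / n : ℂ) * ∑ i, u i)‖ + M ^ 2 / n) := by
  refine ⟨1 / 2, one_half_pos, fun n hn u M hM _ hR => ?_⟩
  have hn0 : (n : ℝ) ≠ 0 := Nat.cast_ne_zero.2 hn.ne'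
  have hz : ∀ i ∈ univ, ‖u i / n‖ ≤ M / n := fun i _ => by
    rw [norm_div, Complex.norm_natCast]
    gcongr
    exact hM i
  have hsum : (1 / n : ℂ) * ∑ i, u i = ∑ i, u i / n := by
    rw [mul_sum]
    exact sum_congr rfl fun i _ => by ring
  have hcard : (#(univ : Finset (Fin n)) : ℝ) * (M / n) ^ 2 = M ^ 2 / n := by
    rw [card_univ, Fintype.card_fin]
    field_simp
  simpa only [hsum, hcard] using Complex.norm_prod_one_add_sub_exp_sum_le univ hR hz
end

section
/- Let A = [a_{ij}] be an n×n complex Hermitian matrix with n ≥ 2, let z ∈ ℂ∖ℝ, let G := (zI − A)^{−1}, and let P be an n×n diagonal complex matrix. For 1 ≤ k ≤ n, let A^{(k)} and P^{(k)} be the (n−1)×(n−1) matrices obtained from A and P by deleting the k-th row and the k-th column, let G^{(k)} := (zI − A^{(k)})^{−1}, and let 𝐚_k ∈ ℂ^{n−1} be the k-th column of A with its diagonal entry a_{kk} removed. Then Tr(P G) − Tr(P^{(k)} G^{(k)}) = (P_{kk} + 𝐚_k* G^{(k)} P^{(k)} G^{(k)} 𝐚_k) / (z − a_{kk} − 𝐚_k*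 G^{(k)} 𝐚_k), and in particular the denominator z − a_{kk} − 𝐚_k* G^{(k)} 𝐚_k is nonzero. -/
/-!
Put `k` last: `z - A` becomes the matrix bordered by the column `-𝐚ₖ`, the row `-𝐚ₖ*` and the
corner `z - aₖₖ` around `z - A⁽ᵏ⁾`, and the Schur complement of `z - A⁽ᵏ⁾` in it is
`d = z - aₖₖ - 𝐚ₖ* G⁽ᵏ⁾ 𝐚ₖ`. Hence `det (z - A) = det (z - A⁽ᵏ⁾) * d`, so `d ≠ 0`, and the bordering
formula for the inverse gives the diagonal blocks `G⁽ᵏ⁾ + d⁻¹ G⁽ᵏ⁾ 𝐚ₖ 𝐚ₖ* G⁽ᵏ⁾` and `d⁻¹` of `G`.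
Since `P` is block diagonal in the same splitting, `Tr (P G)` only sees these two blocks.
-/

open Matrix

def finSuccAboveSumEquiv {n : ℕ} (k : Fin (n + 1)) : Fin n ⊕ Unit ≃ Fin (n + 1) :=
  ((finSuccEquiv' k).trans (Equiv.optionEquivSumPUnit (Fin n))).symm

namespace Matrix

variable {α : Type*} {m : Type*}

def bordered (M : Matrix m m α) (b c : m → α) (δ : α) : Matrix (m ⊕ Unit) (m ⊕ Unit) α :=
  fromBlocks M (replicateCol Unit b) (replicateRow Unit c) (of fun _ _ => δ)

variable [Fintype m]

theorem trace_submatrix_equiv [AddCommMonoid α] {l : Type*} [Fintype l] (A : Matrix m m α)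
    (e : l ≃ m) : (A.submatrix e e).trace = A.trace :=
  e.sum_comp fun i => A i i

theorem trace_bordered_zero_mul_bordered [NonUnitalNonAssocSemiring α] (Q N : Matrix m m α)
    (u v : m → α) (p s : α) :
    (bordered Q 0 0 p * bordered N u v s).trace = (Q * N).trace + p * s := by
  simp [bordered, fromBlocks_multiply, trace, mul_apply]

section Field

variable {K : Type*} [Field K] [DecidableEq m]

theorem schurComplement_bordered (M : Matrix m m K) (b c : m → K) (δ : K) :
    (of fun _ _ => δ : Matrix Unit Unit K) - replicateRow Unit c * M⁻¹ * replicateCol Unit b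
      = (δ - c ⬝ᵥ M⁻¹ *ᵥ b) • 1 := by
  rw [Matrix.mul_assoc, ← replicateCol_mulVec, replicateRow_mul_replicateCol]
  ext
  simp

theorem det_bordered (M : Matrix m m K) (hM : IsUnit M.det) (b c : m → K) (δ : K) :
    (bordered M b c δ).det = M.det * (δ - c ⬝ᵥ M⁻¹ *ᵥ b) := by
  let := M.invertibleOfIsUnitDet hM
  rw [bordered, det_fromBlocks₁₁, invOf_eq_nonsing_inv, schurComplement_bordered]
  simp

theorem inv_bordered (M : Matrix m m K) (hM : IsUnit M.det) (b c : m → K) (δ : K)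
    (hd : δ - c ⬝ᵥ M⁻¹ *ᵥ b ≠ 0) :
    (bordered M b c δ)⁻¹ =
      bordered (M⁻¹ + (δ - c ⬝ᵥ M⁻¹ *ᵥ b)⁻¹ • vecMulVec (M⁻¹ *ᵥ b) (c ᵥ* M⁻¹))
        (-(δ - c ⬝ᵥ M⁻¹ *ᵥ b)⁻¹ • M⁻¹ *ᵥ b) (-(δ - c ⬝ᵥ M⁻¹ *ᵥ b)⁻¹ • c ᵥ* M⁻¹)
        (δ - c ⬝ᵥ M⁻¹ *ᵥ b)⁻¹ := by
  let := M.invertibleOfIsUnitDet hM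
  have hS := schurComplement_bordered M b c δ
  have hS_inv : ((δ - c ⬝ᵥ M⁻¹ *ᵥ b) • 1 : Matrix Unit Unit K)⁻¹ = (δ - c ⬝ᵥ M⁻¹ *ᵥ b)⁻¹ • 1 :=
    inv_eq_left_inv (by simp [smul_smul, hd])
  let : Invertible ((of fun _ _ => δ : Matrix Unit Unit K) -
      replicateRow Unit c * ⅟M * replicateCol Unit b) :=
    invertibleOfIsUnitDet _ (by rw [invOf_eq_nonsing_inv, hS]; simp [hd])
  let := fromBlocks₁₁Invertible M (replicateCol Unit b) (replicateRow Unit c) (of fun _ _ => δ)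
  rw [bordered, ← invOf_eq_nonsing_inv, invOf_fromBlocks₁₁_eq]
  simp only [invOf_eq_nonsing_inv]
  rw [hS, hS_inv, bordered, vecMulVec_eq Unit, replicateCol_smul, replicateRow_smul,
    replicateCol_mulVec, replicateRow_vecMul]
  simp only [Matrix.mul_smul, Matrix.smul_mul, Matrix.mul_one, Matrix.one_mul, Matrix.mul_assoc,
    neg_smul]
  congr 2
  ext
  simp

theorem trace_bordered_zero_mul_inv_bordered (Q M : Matrix m m K) (hM : IsUnit M.det)
    (b c : m → K) (δ p : K) (hd : δ - c ⬝ᵥ M⁻¹ *ᵥ b ≠ 0) :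
    (bordered Q 0 0 p * (bordered M b c δ)⁻¹).trace
      = (Q * M⁻¹).trace + (p + c ⬝ᵥ (M⁻¹ * Q * M⁻¹) *ᵥ b) / (δ - c ⬝ᵥ M⁻¹ *ᵥ b) := by
  rw [inv_bordered M hM b c δ hd, trace_bordered_zero_mul_bordered, Matrix.mul_add, trace_add,
    Matrix.mul_smul, trace_smul, mul_vecMulVec, trace_vecMulVec, dotProduct_comm (Q *ᵥ _),
    ← mulVec_mulVec, ← mulVec_mulVec, dotProduct_mulVec c _ (Q *ᵥ _), smul_eq_mul]
  ring

end Field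

theorem IsHermitian.isUnit_smul_one_sub [DecidableEq m] {A : Matrix m m ℂ} (hA : A.IsHermitian)
    {z : ℂ} (hz : z.im ≠ 0) : IsUnit (z • (1 : Matrix m m ℂ) - A) := by
  have hz_spec : z ∉ spectrum ℂ A := by
    rw [hA.spectral_theorem, Unitary.conjStarAlgAut_apply, Unitary.spectrum_star_right_conjugate,
      spectrum_diagonal]
    rintro ⟨i, rfl⟩
    simp at hz
  simpa [Algebra.algebraMap_eq_smul_one] using spectrum.notMem_iff.mp hz_spec

theorem submatrix_finSuccAboveSumEquiv {n : ℕ}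
    (M : Matrix (Fin (n + 1)) (Fin (n + 1)) α) (k : Fin (n + 1)) :
    M.submatrix (finSuccAboveSumEquiv k) (finSuccAboveSumEquiv k) =
      bordered (M.submatrix k.succAbove k.succAbove) (fun i => M (k.succAbove i) k)
        (fun j => M k (k.succAbove j)) (M k k) := by
  ext (i | i) (j | j) <;> rfl

theorem IsHermitian.submatrix_smul_one_sub_finSuccAboveSumEquiv [Ring α] [StarRing α] {n : ℕ}
    {A : Matrix (Fin (n + 1)) (Fin (n + 1)) α} (hA : A.IsHermitian) (z : α)
    (k : Fin (n + 1)) :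
    (z • 1 - A).submatrix (finSuccAboveSumEquiv k) (finSuccAboveSumEquiv k) =
      bordered (z • 1 - A.submatrix k.succAbove k.succAbove) (-fun i => A (k.succAbove i) k)
        (-star fun i => A (k.succAbove i) k) (z - A k k) := by
  rw [Matrix.submatrix_finSuccAboveSumEquiv]
  congr 1
  · ext i j
    simp [one_apply]
  · ext i
    simp [Fin.succAbove_ne]
  · ext j
    simp [(Fin.succAbove_ne k j).symm, ← hA.apply k (k.succAbove j)]
  · simp

theorem IsDiag.submatrix_finSuccAboveSumEquiv [Zero α] {n : ℕ}
    {P : Matrix (Fin (n + 1)) (Fin (n + 1)) α} (hP : P.IsDiag) (k : Fin (n + 1)) :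
    P.submatrix (finSuccAboveSumEquiv k) (finSuccAboveSumEquiv k) =
      bordered (P.submatrix k.succAbove k.succAbove) 0 0 (P k k) := by
  rw [Matrix.submatrix_finSuccAboveSumEquiv]
  congr 1
  · ext i
    exact hP (Fin.succAbove_ne k i)
  · ext j
    exact hP (Fin.succAbove_ne k j).symm

end Matrix

theorem trace_resolvent_schur_complement_general
    (n : ℕ)
    (A : Matrix (Fin (n + 1)) (Fin (n + 1)) ℂ) (hA : A.IsHermitian)
    (z : ℂ) (hz : z.im ≠ 0)
    (P : Matrix (Fin (n + 1)) (Fin (n + 1)) ℂ) (hP : P.IsDiag)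
    (k : Fin (n + 1)) :
    let G : Matrix (Fin (n + 1)) (Fin (n + 1)) ℂ :=
      (z • (1 : Matrix (Fin (n + 1)) (Fin (n + 1)) ℂ) - A)⁻¹
    let Ak : Matrix (Fin n) (Fin n) ℂ := A.submatrix k.succAbove k.succAbove
    let Pk : Matrix (Fin n) (Fin n) ℂ := P.submatrix k.succAbove k.succAbove
    let Gk : Matrix (Fin n) (Fin n) ℂ := (z • (1 : Matrix (Fin n) (Fin n) ℂ) - Ak)⁻¹
    let a : Fin n → ℂ := fun i => A (k.succAbove i) k
    let d : ℂ := z - A k k - star a ⬝ᵥ Gk.mulVec a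
    d ≠ 0 ∧
      Matrix.trace (P * G) - Matrix.trace (Pk * Gk)
        = (P k k + star a ⬝ᵥ (Gk * Pk * Gk).mulVec a) / d := by
  intro G Ak Pk Gk a d
  set e := finSuccAboveSumEquiv k
  have hM : IsUnit (z • 1 - A).det := (isUnit_iff_isUnit_det _).mp (hA.isUnit_smul_one_sub hz)
  have hMk : IsUnit (z • 1 - Ak).det :=
    (isUnit_iff_isUnit_det _).mp ((hA.submatrix _).isUnit_smul_one_sub hz)
  have hM_blocks :
      (z • 1 - A).submatrix e e = bordered (z • 1 - Ak) (-a) (-star a) (z - A k k) :=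
    hA.submatrix_smul_one_sub_finSuccAboveSumEquiv z k
  have hP_blocks : P.submatrix e e = bordered Pk 0 0 (P k k) := hP.submatrix_finSuccAboveSumEquiv k
  have hd_eq : d = z - A k k - (-star a) ⬝ᵥ Gk *ᵥ (-a) := by
    simp only [d, neg_dotProduct, mulVec_neg, dotProduct_neg, neg_neg]
  have hd : d ≠ 0 := by
    have hdet := det_bordered (z • 1 - Ak) hMk (-a) (-star a) (z - A k k)
    rw [← hM_blocks, det_submatrix_equiv_self, ← hd_eq] at hdet
    exact right_ne_zero_of_mul (hdet ▸ hM).ne_zero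
  refine ⟨hd, ?_⟩
  have htr : (P * G).trace =
      (bordered Pk 0 0 (P k k) * (bordered (z • 1 - Ak) (-a) (-star a) (z - A k k))⁻¹).trace := by
    rw [← hP_blocks, ← hM_blocks, inv_submatrix_equiv, submatrix_mul_equiv, trace_submatrix_equiv]
  rw [htr, trace_bordered_zero_mul_inv_bordered _ _ hMk _ _ _ _ (hd_eq ▸ hd), ← hd_eq]
  simp only [neg_dotProduct, mulVec_neg, dotProduct_neg, neg_neg]
  exact add_sub_cancel_left _ _

/-- Schur complement identity for traces of resolvents: for an `(n+1)×(n+1)` Hermitian matrix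
`A`, non-real `z`, `G = (z−A)⁻¹`, a diagonal matrix `P`, and an index `k`, with `A⁽ᵏ⁾`, `P⁽ᵏ⁾`
obtained by deleting the `k`-th row and column, `G⁽ᵏ⁾ = (z−A⁽ᵏ⁾)⁻¹` and `𝐚ₖ` the `k`-th
column of `A` with its `k`-th entry removed, the denominator `z − a_{kk} − 𝐚ₖ* G⁽ᵏ⁾ 𝐚ₖ` is
nonzero and
`Tr(P G) − Tr(P⁽ᵏ⁾ G⁽ᵏ⁾) = (P_{kk} + 𝐚ₖ* G⁽ᵏ⁾ P⁽ᵏ⁾ G⁽ᵏ⁾ 𝐚ₖ)/(z − a_{kk} − 𝐚ₖ* G⁽ᵏ⁾ 𝐚ₖ)`. -/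
theorem trace_resolvent_schur_complement
    (n : ℕ) (hn : 1 ≤ n)
    (A : Matrix (Fin (n + 1)) (Fin (n + 1)) ℂ) (hA : A.IsHermitian)
    (z : ℂ) (hz : z.im ≠ 0)
    (P : Matrix (Fin (n + 1)) (Fin (n + 1)) ℂ) (hP : P.IsDiag)
    (k : Fin (n + 1)) :
    let G : Matrix (Fin (n + 1)) (Fin (n + 1)) ℂ :=
      (z • (1 : Matrix (Fin (n + 1)) (Fin (n + 1)) ℂ) - A)⁻¹
    let Ak : Matrix (Fin n) (Fin n) ℂ := A.submatrix k.succAbove k.succAbove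
    let Pk : Matrix (Fin n) (Fin n) ℂ := P.submatrix k.succAbove k.succAbove
    let Gk : Matrix (Fin n) (Fin n) ℂ := (z • (1 : Matrix (Fin n) (Fin n) ℂ) - Ak)⁻¹
    let a : Fin n → ℂ := fun i => A (k.succAbove i) k
    let d : ℂ := z - A k k - star a ⬝ᵥ Gk.mulVec a
    d ≠ 0 ∧
      Matrix.trace (P * G) - Matrix.trace (Pk * Gk)
        = (P k k + star a ⬝ᵥ (Gk * Pk * Gk).mulVec a) / d :=
  trace_resolvent_schur_complement_general n A hA z hz P hP k
end

section
/- Let A be an n×n complex Hermitian matrix with n ≥ 2, let z ∈ ℂ∖ℝ, let G := (zI − A)^{−1}, and let P be an n×n diagonal complex matrix. For 1 ≤ k ≤ n, let A^{(k)} and P^{(k)} be the matrices obtained from A and P by deleting the k-th row and column, and let G^{(k)} := (zI − A^{(k)})^{−1}. Then |Tr(P G) − Tr(P^{(k)} G^{(k)})| ≤ 5‖P‖_∞ / |Im z|, where ‖P‖_∞ is the operator norm of P (equal to max_k |P_{kk}|). -/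
/-!
Write `G = (z - A)⁻¹`. Eliminating the pivot `G k k` from `G` gives the inverse of the minor
`z - A⁽ᵏ⁾` (Schur complement), and the trace difference collapses to the single entry
`(G P G)ₖₖ / Gₖₖ`. The Ward identity `G - Gᴴ = (z̄ - z) G Gᴴ` gives
`|Im z| ∑ⱼ |Gₖⱼ|² = |Im Gₖₖ| ≤ |Gₖₖ|`, and likewise for the `k`-th column, while
Cauchy–Schwarz bounds `|(G P G)ₖₖ|` by `‖P‖` times the norms of the `k`-th row and column of `G`.
Together, `|(G P G)ₖₖ / Gₖₖ| ≤ ‖P‖ / |Im z|`.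
-/

open Matrix

namespace Matrix

variable {α K : Type*} {n : ℕ}

theorem submatrix_succAbove_mul_submatrix_succAbove {m l m' l' : Type*}
    [NonUnitalNonAssocSemiring α] (X : Matrix m (Fin (n + 1)) α) (Y : Matrix (Fin (n + 1)) l α)
    {k : Fin (n + 1)} (hY : ∀ j, Y k j = 0) (r : m' → m) (c : l' → l) :
    X.submatrix r k.succAbove * Y.submatrix k.succAbove c = (X * Y).submatrix r c := by
  ext i j
  simp [mul_apply, Fin.sum_univ_succAbove _ k, hY]

theorem trace_eq_add_trace_submatrix_succAbove [AddCommMonoid α]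
    (X : Matrix (Fin (n + 1)) (Fin (n + 1)) α) (k : Fin (n + 1)) :
    trace X = X k k + trace (X.submatrix k.succAbove k.succAbove) :=
  Fin.sum_univ_succAbove _ k

/-- One step of Gaussian elimination with pivot `G k k`: away from the `k`-th row and column this
is the Schur complement of `G k k` in `G`. -/
def pivotComplement {m : Type*} [Field K] (G : Matrix m m K) (k : m) : Matrix m m K :=
  G - (G k k)⁻¹ • vecMulVec (fun i => G i k) (G k)

section Field

variable {m : Type*} [Field K] {G : Matrix m m K} {k : m}

theorem pivotComplement_apply_pivot_left (hk : G k k ≠ 0) (j : m) :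
    pivotComplement G k k j = 0 := by
  simp [pivotComplement, vecMulVec_apply, hk]

theorem pivotComplement_apply_pivot_right (hk : G k k ≠ 0) (i : m) :
    pivotComplement G k i k = 0 := by
  simp [pivotComplement, vecMulVec_apply, mul_comm (G i k), inv_mul_cancel_left₀ hk]

theorem inv_submatrix_succAbove {M : Matrix (Fin (n + 1)) (Fin (n + 1)) K} (hM : IsUnit M.det)
    {k : Fin (n + 1)} (hk : M⁻¹ k k ≠ 0) :
    (M.submatrix k.succAbove k.succAbove)⁻¹
      = (pivotComplement M⁻¹ k).submatrix k.succAbove k.succAbove := by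
  apply inv_eq_right_inv
  rw [submatrix_succAbove_mul_submatrix_succAbove _ _ (pivotComplement_apply_pivot_left hk),
    pivotComplement, mul_sub, Matrix.mul_smul, mul_vecMulVec]
  ext i j
  have hcol : (M *ᵥ fun b => M⁻¹ b k) (k.succAbove i) = 0 := by
    simpa [mul_apply, mulVec, dotProduct, Fin.succAbove_ne k i] using
      congrFun (congrFun (mul_nonsing_inv M hM) (k.succAbove i)) k
  simp [mul_nonsing_inv M hM, vecMulVec_apply, hcol, one_apply,
    Fin.succAbove_right_injective.eq_iff]

theorem trace_mul_inv_sub_trace_mul_inv_submatrix_succAbove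
    (P : Matrix (Fin (n + 1)) (Fin (n + 1)) K) {M : Matrix (Fin (n + 1)) (Fin (n + 1)) K}
    (hM : IsUnit M.det) {k : Fin (n + 1)} (hk : M⁻¹ k k ≠ 0) :
    trace (P * M⁻¹)
        - trace (P.submatrix k.succAbove k.succAbove * (M.submatrix k.succAbove k.succAbove)⁻¹)
      = (M⁻¹ * P * M⁻¹) k k / M⁻¹ k k := by
  have hpivot : (P * pivotComplement M⁻¹ k) k k = 0 := by
    simp [mul_apply, pivotComplement_apply_pivot_right hk]
  rw [inv_submatrix_succAbove hM hk,
    submatrix_succAbove_mul_submatrix_succAbove _ _ (pivotComplement_apply_pivot_left hk),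
    ← zero_add (trace (submatrix _ _ _)), ← hpivot, ← trace_eq_add_trace_submatrix_succAbove,
    ← trace_sub, ← mul_sub, pivotComplement, sub_sub_cancel, Matrix.mul_smul, trace_smul,
    mul_vecMulVec, trace_vecMulVec, smul_eq_mul, div_eq_inv_mul]
  congr 1
  simp only [mul_apply, mulVec, dotProduct, Finset.sum_mul]
  rw [Finset.sum_comm]
  exact Finset.sum_congr rfl fun _ _ => Finset.sum_congr rfl fun _ _ => by ring

end Field

theorem norm_mul_mul_apply_sq_le {𝕜 m : Type*} [RCLike 𝕜] [Fintype m] [DecidableEq m]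
    (X P Y : Matrix m m 𝕜) (i j : m) :
    ‖(X * P * Y) i j‖ ^ 2
      ≤ ‖toEuclideanCLM (𝕜 := 𝕜) P‖ ^ 2 * (∑ a, ‖X i a‖ ^ 2) * ∑ b, ‖Y b j‖ ^ 2 := by
  set x : EuclideanSpace 𝕜 m := WithLp.toLp 2 (star (X i))
  set y : EuclideanSpace 𝕜 m := WithLp.toLp 2 (fun b => Y b j)
  have hinner : (X * P * Y) i j = inner 𝕜 x (toEuclideanCLM (𝕜 := 𝕜) P y) := by
    simp only [mul_apply, Finset.sum_mul, toEuclideanCLM_toLp, PiLp.inner_apply, Pi.star_apply,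
      RCLike.star_def, mulVec, dotProduct, RCLike.inner_apply, RingHomCompTriple.comp_apply,
      RingHom.id_apply, x, y]
    rw [Finset.sum_comm]
    exact Finset.sum_congr rfl fun _ _ => Finset.sum_congr rfl fun _ _ => by ring
  have hx : ‖x‖ ^ 2 = ∑ a, ‖X i a‖ ^ 2 := by simp [x, EuclideanSpace.norm_sq_eq]
  have hy : ‖y‖ ^ 2 = ∑ b, ‖Y b j‖ ^ 2 := by simp [y, EuclideanSpace.norm_sq_eq]
  rw [hinner, ← hx, ← hy]
  calc ‖inner 𝕜 x (toEuclideanCLM (𝕜 := 𝕜) P y)‖ ^ 2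
      ≤ (‖x‖ * (‖toEuclideanCLM (𝕜 := 𝕜) P‖ * ‖y‖)) ^ 2 := by
        gcongr
        exact (norm_inner_le_norm _ _).trans
          (mul_le_mul_of_nonneg_left ((toEuclideanCLM (𝕜 := 𝕜) P).le_opNorm y) (norm_nonneg _))
    _ = _ := by ring

section Resolvent

variable {m : Type*} [Fintype m] [DecidableEq m] {A : Matrix m m ℂ} {z : ℂ}

theorem IsHermitian.isUnit_det_smul_one_sub (hA : A.IsHermitian) (hz : z.im ≠ 0) :
    IsUnit (z • 1 - A).det := by
  have hdet : (z • 1 - A).det = ∏ i, (z - hA.eigenvalues i) := by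
    rw [smul_one_eq_diagonal, ← scalar_apply, ← eval_charpoly, hA.charpoly_eq,
      Polynomial.eval_prod]
    simp
  rw [isUnit_iff_ne_zero, hdet, Finset.prod_ne_zero_iff]
  intro i _ h
  exact hz (by simpa using congrArg Complex.im h)

/-- The Ward identity `G - Gᴴ = (z̄ - z) G Gᴴ`, read on the diagonal. -/
theorem IsHermitian.im_inv_smul_one_sub_apply_self_eq_row (hA : A.IsHermitian) (hz : z.im ≠ 0)
    (k : m) :
    ((z • 1 - A)⁻¹ k k).im = -z.im * ∑ j, ‖(z • 1 - A)⁻¹ k j‖ ^ 2 := by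
  set M := z • 1 - A
  set G := M⁻¹
  have hM := hA.isUnit_det_smul_one_sub hz
  have hMH : Mᴴ - M = (star z - z) • 1 := by
    simp only [M, conjTranspose_sub, conjTranspose_smul, conjTranspose_one, hA.eq, sub_smul]
    abel
  have hward : G - Gᴴ = (star z - z) • (G * Gᴴ) := by
    calc G - Gᴴ = G * (Mᴴ - M) * Gᴴ := by
          rw [mul_sub, sub_mul, mul_assoc, ← conjTranspose_mul, nonsing_inv_mul _ hM,
            conjTranspose_one, mul_one, one_mul]
      _ = (star z - z) • (G * Gᴴ) := by simp [hMH]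
  have h := congrArg (fun X => (X k k).im) hward
  simp only [sub_apply, conjTranspose_apply, RCLike.star_def, Complex.sub_im, Complex.conj_im,
    sub_neg_eq_add, smul_apply, mul_apply, smul_eq_mul, Complex.mul_im, Complex.sub_re,
    Complex.conj_re, sub_self, Complex.im_sum, mul_neg, zero_mul, Complex.re_sum, Complex.mul_re,
    zero_add] at h
  simp only [Complex.sq_norm, Complex.normSq_apply]
  linarith

theorem IsHermitian.im_inv_smul_one_sub_apply_self_eq_col (hA : A.IsHermitian) (hz : z.im ≠ 0)
    (k : m) :
    ((z • 1 - A)⁻¹ k k).im = -z.im * ∑ j, ‖(z • 1 - A)⁻¹ j k‖ ^ 2 := by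
  have htranspose : (z • 1 - Aᵀ)⁻¹ = (z • 1 - A)⁻¹ᵀ := by
    rw [transpose_nonsing_inv, transpose_sub, transpose_smul, transpose_one]
  simpa [htranspose] using hA.transpose.im_inv_smul_one_sub_apply_self_eq_row hz k

theorem IsHermitian.inv_smul_one_sub_apply_self_ne_zero (hA : A.IsHermitian) (hz : z.im ≠ 0)
    (k : m) : (z • 1 - A)⁻¹ k k ≠ 0 := by
  intro hzero
  have hsum := hA.im_inv_smul_one_sub_apply_self_eq_row hz k
  rw [hzero, Complex.zero_im, zero_eq_mul, neg_eq_zero, or_iff_right hz,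
    Finset.sum_eq_zero_iff_of_nonneg fun _ _ => by positivity] at hsum
  have hrow : ∀ j, (z • 1 - A)⁻¹ k j = 0 := fun j => by simpa using hsum j (Finset.mem_univ j)
  simpa [mul_apply, hrow] using
    congrFun (congrFun (nonsing_inv_mul _ (hA.isUnit_det_smul_one_sub hz)) k) k

theorem IsHermitian.norm_inv_mul_mul_inv_apply_self_mul_abs_im_le (hA : A.IsHermitian)
    (hz : z.im ≠ 0) (P : Matrix m m ℂ) (k : m) :
    ‖((z • 1 - A)⁻¹ * P * (z • 1 - A)⁻¹) k k‖ * |z.im|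
      ≤ ‖toEuclideanCLM (𝕜 := ℂ) P‖ * ‖(z • 1 - A)⁻¹ k k‖ := by
  have hrow := hA.im_inv_smul_one_sub_apply_self_eq_row hz k
  have hcol := hA.im_inv_smul_one_sub_apply_self_eq_col hz k
  generalize (z • 1 - A)⁻¹ = G at hrow hcol ⊢
  have hward : ∀ v : m → ℂ, (G k k).im = -z.im * ∑ j, ‖v j‖ ^ 2 →
      (∑ j, ‖v j‖ ^ 2) * |z.im| ≤ ‖G k k‖ := fun v h => by
    rw [← abs_of_nonneg (by positivity : 0 ≤ ∑ j, ‖v j‖ ^ 2), ← abs_mul, mul_comm, ← abs_neg,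
      ← neg_mul, ← h]
    exact Complex.abs_im_le_norm _
  replace hrow := hward (G k) hrow
  replace hcol := hward (fun j => G j k) hcol
  rw [← sq_le_sq₀ (by positivity) (by positivity)]
  calc (‖(G * P * G) k k‖ * |z.im|) ^ 2 = ‖(G * P * G) k k‖ ^ 2 * |z.im| ^ 2 := by ring
    _ ≤ ‖toEuclideanCLM (𝕜 := ℂ) P‖ ^ 2 * (∑ j, ‖G k j‖ ^ 2) * (∑ j, ‖G j k‖ ^ 2)
          * |z.im| ^ 2 := by
        gcongr
        exact norm_mul_mul_apply_sq_le G P G k k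
    _ = ‖toEuclideanCLM (𝕜 := ℂ) P‖ ^ 2
          * (((∑ j, ‖G k j‖ ^ 2) * |z.im|) * ((∑ j, ‖G j k‖ ^ 2) * |z.im|)) := by ring
    _ ≤ ‖toEuclideanCLM (𝕜 := ℂ) P‖ ^ 2 * (‖G k k‖ * ‖G k k‖) :=
        mul_le_mul_of_nonneg_left (mul_le_mul hrow hcol (by positivity) (norm_nonneg _))
          (sq_nonneg _)
    _ = (‖toEuclideanCLM (𝕜 := ℂ) P‖ * ‖G k k‖) ^ 2 := by ring

end Resolvent

end Matrix

theorem trace_resolvent_minor_bound_general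
    (n : ℕ)
    (A : Matrix (Fin (n + 1)) (Fin (n + 1)) ℂ) (hA : A.IsHermitian)
    (z : ℂ) (hz : z.im ≠ 0)
    (P : Matrix (Fin (n + 1)) (Fin (n + 1)) ℂ)
    (k : Fin (n + 1)) :
    let G : Matrix (Fin (n + 1)) (Fin (n + 1)) ℂ :=
      (z • (1 : Matrix (Fin (n + 1)) (Fin (n + 1)) ℂ) - A)⁻¹
    let Ak : Matrix (Fin n) (Fin n) ℂ := A.submatrix k.succAbove k.succAbove
    let Pk : Matrix (Fin n) (Fin n) ℂ := P.submatrix k.succAbove k.succAbove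
    let Gk : Matrix (Fin n) (Fin n) ℂ := (z • (1 : Matrix (Fin n) (Fin n) ℂ) - Ak)⁻¹
    ‖Matrix.trace (P * G) - Matrix.trace (Pk * Gk)‖
      ≤ 5 * ‖Matrix.toEuclideanCLM (𝕜 := ℂ) (n := Fin (n + 1)) P‖ / |z.im| := by
  intro G Ak Pk Gk
  have hminor : z • (1 : Matrix (Fin n) (Fin n) ℂ) - Ak
      = (z • 1 - A).submatrix k.succAbove k.succAbove := by
    ext i j
    simp [Ak, one_apply, Fin.succAbove_right_injective.eq_iff]
  have hpivot := hA.inv_smul_one_sub_apply_self_ne_zero hz k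
  have hdiff : trace (P * G) - trace (Pk * Gk) = (G * P * G) k k / G k k := by
    simp only [Gk, hminor]
    exact trace_mul_inv_sub_trace_mul_inv_submatrix_succAbove P
      (hA.isUnit_det_smul_one_sub hz) hpivot
  calc ‖trace (P * G) - trace (Pk * Gk)‖ ≤ ‖toEuclideanCLM (𝕜 := ℂ) P‖ / |z.im| := by
        rw [hdiff, norm_div, div_le_div_iff₀ (norm_pos_iff.mpr hpivot) (abs_pos.mpr hz)]
        exact hA.norm_inv_mul_mul_inv_apply_self_mul_abs_im_le hz P k
    _ ≤ 5 * ‖toEuclideanCLM (𝕜 := ℂ) P‖ / |z.im| := by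
        gcongr
        linarith [norm_nonneg (toEuclideanCLM (𝕜 := ℂ) P)]

/-- Trace perturbation bound: for an `(n+1)×(n+1)` Hermitian matrix `A`, non-real `z`,
`G = (z−A)⁻¹`, a diagonal matrix `P`, and an index `k`, with `A⁽ᵏ⁾`, `P⁽ᵏ⁾` obtained by
deleting the `k`-th row and column and `G⁽ᵏ⁾ = (z−A⁽ᵏ⁾)⁻¹`,
`|Tr(P G) − Tr(P⁽ᵏ⁾ G⁽ᵏ⁾)| ≤ 5 ‖P‖_∞ / |Im z|`, where `‖P‖_∞` is the operator norm of `P`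
on the Euclidean space `ℂⁿ⁺¹`. -/
theorem trace_resolvent_minor_bound
    (n : ℕ) (hn : 1 ≤ n)
    (A : Matrix (Fin (n + 1)) (Fin (n + 1)) ℂ) (hA : A.IsHermitian)
    (z : ℂ) (hz : z.im ≠ 0)
    (P : Matrix (Fin (n + 1)) (Fin (n + 1)) ℂ) (hP : P.IsDiag)
    (k : Fin (n + 1)) :
    let G : Matrix (Fin (n + 1)) (Fin (n + 1)) ℂ :=
      (z • (1 : Matrix (Fin (n + 1)) (Fin (n + 1)) ℂ) - A)⁻¹
    let Ak : Matrix (Fin n) (Fin n) ℂ := A.submatrix k.succAbove k.succAbove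
    let Pk : Matrix (Fin n) (Fin n) ℂ := P.submatrix k.succAbove k.succAbove
    let Gk : Matrix (Fin n) (Fin n) ℂ := (z • (1 : Matrix (Fin n) (Fin n) ℂ) - Ak)⁻¹
    ‖Matrix.trace (P * G) - Matrix.trace (Pk * Gk)‖
      ≤ 5 * ‖Matrix.toEuclideanCLM (𝕜 := ℂ) (n := Fin (n + 1)) P‖ / |z.im| :=
  trace_resolvent_minor_bound_general n A hA z hz P k
end

section
/- Let n ≥ 4, let (X₁, …, Xₙ) be an exchangeable random vector of real random variables with finite fourth moments, and let α₁, …, αₙ be complex numbers with α₁ + ⋯ + αₙ = 0. Set sum₄(α) := ∑_{i=1}^n α_i⁴ and sum_{2,2}(α) := ∑_{i≠j} α_i² α_j². Then E[(∑_{i=1}^n α_i X_i)⁴] = sum₄(α)·(E[X₁⁴] − 4E[X₁³X₂] + 6E[X₁²X₂X₃] − 3E[X₁X₂X₃X₄]) + sum_{2,2}(α)·(3E[X₁²X₂²] − 6E[X₁²X₂X₃] + 3E[X₁X₂X₃X₄]). -/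
/-!
Expanding the fourth power, `E[(∑ αᵢ Xᵢ)⁴] = ∑ αᵢ αⱼ αₖ αₗ E[Xᵢ Xⱼ Xₖ Xₗ]`. By exchangeability the
moment `E[Xᵢ Xⱼ Xₖ Xₗ]` depends only on which of the four indices coincide, so it is a fixed
combination of products of Kronecker deltas, one for each set partition of the four positions.
Summed against `αᵢ αⱼ αₖ αₗ`, a partition with a singleton block contributes a factor `∑ αᵢ = 0`;
only the three perfect matchings, each giving `(∑ αᵢ²)²`, and the one-block partition, giving
`∑ αᵢ⁴`, survive.
-/

open MeasureTheory ProbabilityTheory Finset Function Equiv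
open scoped ENNReal

theorem apply_eq_of_injective_of_perm_invariant {ι κ β : Type*} [Finite κ] (g : (κ → ι) → β)
    (hg : ∀ (σ : Perm ι) v, g (σ ∘ v) = g v) {v w : κ → ι} (hv : Injective v)
    (hw : Injective w) : g v = g w := by
  obtain ⟨σ, hσ⟩ := Perm.exists_extending_pair v w hv hw
  rw [← hg σ v]
  exact congrArg g (funext hσ)

structure IsExchangeableTensor {ι β : Type*} (f : ι → ι → ι → ι → β) : Prop where
  perm_apply : ∀ (σ : Perm ι) i j k l, f (σ i) (σ j) (σ k) (σ l) = f i j k l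
  swap₁₂ : ∀ i j k l, f i j k l = f j i k l
  swap₂₃ : ∀ i j k l, f i j k l = f i k j l
  swap₃₄ : ∀ i j k l, f i j k l = f i j l k

namespace IsExchangeableTensor

variable {ι β : Type*} {f : ι → ι → ι → ι → β}

theorem comp {γ : Type*} (hf : IsExchangeableTensor f) (g : β → γ) :
    IsExchangeableTensor fun i j k l => g (f i j k l) where
  perm_apply σ i j k l := by rw [hf.perm_apply]
  swap₁₂ i j k l := by rw [hf.swap₁₂]
  swap₂₃ i j k l := by rw [hf.swap₂₃]
  swap₃₄ i j k l := by rw [hf.swap₃₄]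

theorem apply₄ (hf : IsExchangeableTensor f) (e : Fin 4 ↪ ι) (i : ι) :
    f i i i i = f (e 0) (e 0) (e 0) (e 0) :=
  apply_eq_of_injective_of_perm_invariant (fun v : Fin 1 → ι => f (v 0) (v 0) (v 0) (v 0))
    (fun σ _ => hf.perm_apply σ _ _ _ _) (v := ![i]) (w := e ∘ ![0])
    (injective_of_subsingleton _) (injective_of_subsingleton _)

theorem apply₃₁ (hf : IsExchangeableTensor f) (e : Fin 4 ↪ ι) {i j : ι} (hij : i ≠ j) :
    f i i i j = f (e 0) (e 0) (e 0) (e 1) :=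
  apply_eq_of_injective_of_perm_invariant (fun v : Fin 2 → ι => f (v 0) (v 0) (v 0) (v 1))
    (fun σ _ => hf.perm_apply σ _ _ _ _) (v := ![i, j]) (w := e ∘ ![0, 1])
    (by simpa using hij) (e.injective.comp (by decide))

theorem apply₂₂ (hf : IsExchangeableTensor f) (e : Fin 4 ↪ ι) {i j : ι} (hij : i ≠ j) :
    f i i j j = f (e 0) (e 0) (e 1) (e 1) :=
  apply_eq_of_injective_of_perm_invariant (fun v : Fin 2 → ι => f (v 0) (v 0) (v 1) (v 1))
    (fun σ _ => hf.perm_apply σ _ _ _ _) (v := ![i, j]) (w := e ∘ ![0, 1])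
    (by simpa using hij) (e.injective.comp (by decide))

theorem apply₂₁₁ (hf : IsExchangeableTensor f) (e : Fin 4 ↪ ι) {i j k : ι} (hij : i ≠ j)
    (hik : i ≠ k) (hjk : j ≠ k) : f i i j k = f (e 0) (e 0) (e 1) (e 2) :=
  apply_eq_of_injective_of_perm_invariant (fun v : Fin 3 → ι => f (v 0) (v 0) (v 1) (v 2))
    (fun σ _ => hf.perm_apply σ _ _ _ _) (v := ![i, j, k]) (w := e ∘ ![0, 1, 2])
    (by intro x y; fin_cases x <;> fin_cases y <;> simp_all [eq_comm])
    (e.injective.comp (by decide))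

theorem apply₁₁₁₁ (hf : IsExchangeableTensor f) (e : Fin 4 ↪ ι) {i j k l : ι} (hij : i ≠ j)
    (hik : i ≠ k) (hil : i ≠ l) (hjk : j ≠ k) (hjl : j ≠ l) (hkl : k ≠ l) :
    f i j k l = f (e 0) (e 1) (e 2) (e 3) :=
  apply_eq_of_injective_of_perm_invariant (fun v : Fin 4 → ι => f (v 0) (v 1) (v 2) (v 3))
    (fun σ _ => hf.perm_apply σ _ _ _ _) (v := ![i, j, k, l]) (w := e)
    (by intro x y; fin_cases x <;> fin_cases y <;> simp_all [eq_comm]) e.injective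

end IsExchangeableTensor

section DeltaExpansion

variable {ι R : Type*} [DecidableEq ι] [CommRing R]

/-- The Möbius inversion over the set partitions of the four positions: the combination of
Kronecker deltas whose value at `(i, j, k, l)` is `m₄`, `m₃₁`, `m₂₂`, `m₂₁₁` or `m₁₁₁₁` according
as the coincidences among `i, j, k, l` have block sizes `4`, `3 + 1`, `2 + 2`, `2 + 1 + 1` or
`1 + 1 + 1 + 1`. -/
def deltaExpansion (m₄ m₃₁ m₂₂ m₂₁₁ m₁₁₁₁ : R) (i j k l : ι) : R :=
  let δ : ι → ι → R := fun a b => if a = b then 1 else 0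
  m₁₁₁₁ + (m₂₁₁ - m₁₁₁₁) * (δ i j + δ i k + δ i l + δ j k + δ j l + δ k l)
    + (m₂₂ - 2 * m₂₁₁ + m₁₁₁₁) * (δ i j * δ k l + δ i k * δ j l + δ i l * δ j k)
    + (m₃₁ - 3 * m₂₁₁ + 2 * m₁₁₁₁)
      * (δ i j * δ i k + δ i j * δ i l + δ i k * δ i l + δ j k * δ j l)
    + (m₄ - 4 * m₃₁ - 3 * m₂₂ + 12 * m₂₁₁ - 6 * m₁₁₁₁) * (δ i j * δ i k * δ i l)

theorem sum_mul_deltaExpansion [Fintype ι] (α : ι → R) (hα : ∑ i, α i = 0)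
    (m₄ m₃₁ m₂₂ m₂₁₁ m₁₁₁₁ : R) :
    ∑ i, ∑ j, ∑ k, ∑ l, α i * α j * α k * α l * deltaExpansion m₄ m₃₁ m₂₂ m₂₁₁ m₁₁₁₁ i j k l
      = 3 * (m₂₂ - 2 * m₂₁₁ + m₁₁₁₁) * (∑ i, α i ^ 2) ^ 2
        + (m₄ - 4 * m₃₁ - 3 * m₂₂ + 12 * m₂₁₁ - 6 * m₁₁₁₁) * ∑ i, α i ^ 4 := by
  unfold deltaExpansion
  generalize m₂₁₁ - m₁₁₁₁ = c₂₁₁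
  generalize m₂₂ - 2 * m₂₁₁ + m₁₁₁₁ = c₂₂
  generalize m₃₁ - 3 * m₂₁₁ + 2 * m₁₁₁₁ = c₃₁
  generalize m₄ - 4 * m₃₁ - 3 * m₂₂ + 12 * m₂₁₁ - 6 * m₁₁₁₁ = c₄
  simp only [mul_add, mul_ite, mul_one, mul_zero, sum_add_distrib, sum_ite_irrel,
    sum_const_zero, sum_ite_eq, mem_univ, if_true]
  ring_nf
  simp only [← mul_sum, ← sum_mul, hα]
  ring

theorem IsExchangeableTensor.eq_deltaExpansion {f : ι → ι → ι → ι → R}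
    (hf : IsExchangeableTensor f) (e : Fin 4 ↪ ι) (i j k l : ι) :
    f i j k l = deltaExpansion (f (e 0) (e 0) (e 0) (e 0)) (f (e 0) (e 0) (e 0) (e 1))
      (f (e 0) (e 0) (e 1) (e 1)) (f (e 0) (e 0) (e 1) (e 2)) (f (e 0) (e 1) (e 2) (e 3))
      i j k l := by
  obtain rfl | hij := eq_or_ne i j
  · obtain rfl | hik := eq_or_ne i k
    · obtain rfl | hil := eq_or_ne i l
      · rw [hf.apply₄ e]; simp [deltaExpansion]; ring
      · rw [hf.apply₃₁ e hil]; simp [deltaExpansion, *, Ne.symm]; ring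
    · obtain rfl | hil := eq_or_ne i l
      · rw [hf.swap₃₄, hf.apply₃₁ e hik]; simp [deltaExpansion, *, Ne.symm]; ring
      · obtain rfl | hkl := eq_or_ne k l
        · rw [hf.apply₂₂ e hik]; simp [deltaExpansion, *, Ne.symm]; ring
        · rw [hf.apply₂₁₁ e hik hil hkl]; simp [deltaExpansion, *, Ne.symm]
  · obtain rfl | hik := eq_or_ne i k
    · obtain rfl | hjl := eq_or_ne j l
      · rw [hf.swap₂₃, hf.apply₂₂ e hij]; simp [deltaExpansion, *, Ne.symm]; ring
      · obtain rfl | hil := eq_or_ne i l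
        · rw [hf.swap₂₃, hf.swap₃₄, hf.apply₃₁ e hij]; simp [deltaExpansion, *, Ne.symm]; ring
        · rw [hf.swap₂₃, hf.apply₂₁₁ e hij hil hjl]; simp [deltaExpansion, *, Ne.symm]
    · obtain rfl | hjk := eq_or_ne j k
      · obtain rfl | hjl := eq_or_ne j l
        · rw [hf.swap₁₂, hf.swap₂₃, hf.swap₃₄, hf.apply₃₁ e hij.symm]
          simp [deltaExpansion, *, Ne.symm]; ring
        · obtain rfl | hil := eq_or_ne i l
          · rw [hf.swap₁₂, hf.swap₂₃, hf.apply₂₂ e hij.symm]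
            simp [deltaExpansion, *, Ne.symm]; ring
          · rw [hf.swap₁₂, hf.swap₂₃, hf.apply₂₁₁ e hij.symm hjl hil]
            simp [deltaExpansion, *, Ne.symm]
      · obtain rfl | hil := eq_or_ne i l
        · rw [hf.swap₃₄, hf.swap₂₃, hf.apply₂₁₁ e hij hik hjk]; simp [deltaExpansion, *, Ne.symm]
        · obtain rfl | hjl := eq_or_ne j l
          · rw [hf.swap₃₄, hf.swap₁₂, hf.swap₂₃, hf.apply₂₁₁ e hij.symm hjk hik]
            simp [deltaExpansion, *, Ne.symm]
          · obtain rfl | hkl := eq_or_ne k l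
            · rw [hf.swap₂₃, hf.swap₃₄, hf.swap₁₂, hf.swap₂₃,
                hf.apply₂₁₁ e hik.symm hjk.symm hij]
              simp [deltaExpansion, *, Ne.symm]
            · rw [hf.apply₁₁₁₁ e hij hik hil hjk hjl hkl]; simp [deltaExpansion, *, Ne.symm]

theorem sum_sum_erase_sq_mul_sq [Fintype ι] (α : ι → R) :
    ∑ i, ∑ j ∈ univ.erase i, α i ^ 2 * α j ^ 2 = (∑ i, α i ^ 2) ^ 2 - ∑ i, α i ^ 4 := by
  simp only [sum_erase_eq_sub (mem_univ _), ← mul_sum, sum_sub_distrib, ← sum_mul, ← pow_add]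
  ring

theorem IsExchangeableTensor.sum_mul_eq [Fintype ι] {f : ι → ι → ι → ι → R}
    (hf : IsExchangeableTensor f) (e : Fin 4 ↪ ι) (α : ι → R) (hα : ∑ i, α i = 0) :
    ∑ i, ∑ j, ∑ k, ∑ l, α i * α j * α k * α l * f i j k l
      = (∑ i, α i ^ 4) * (f (e 0) (e 0) (e 0) (e 0) - 4 * f (e 0) (e 0) (e 0) (e 1)
            + 6 * f (e 0) (e 0) (e 1) (e 2) - 3 * f (e 0) (e 1) (e 2) (e 3))
        + (∑ i, ∑ j ∈ univ.erase i, α i ^ 2 * α j ^ 2) * (3 * f (e 0) (e 0) (e 1) (e 1)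
            - 6 * f (e 0) (e 0) (e 1) (e 2) + 3 * f (e 0) (e 1) (e 2) (e 3)) := by
  have h := sum_mul_deltaExpansion α hα (f (e 0) (e 0) (e 0) (e 0)) (f (e 0) (e 0) (e 0) (e 1))
    (f (e 0) (e 0) (e 1) (e 1)) (f (e 0) (e 0) (e 1) (e 2)) (f (e 0) (e 1) (e 2) (e 3))
  simp only [← hf.eq_deltaExpansion e] at h
  rw [h, sum_sum_erase_sq_mul_sq]
  ring

end DeltaExpansion

section Moments

variable {Ω ι : Type*} [MeasurableSpace Ω] {μ : Measure Ω}

theorem integrable_mul_mul_mul_of_memLp_four {f₁ f₂ f₃ f₄ : Ω → ℝ} (h₁ : MemLp f₁ 4 μ)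
    (h₂ : MemLp f₂ 4 μ) (h₃ : MemLp f₃ 4 μ) (h₄ : MemLp f₄ 4 μ) :
    Integrable (fun ω => f₁ ω * f₂ ω * f₃ ω * f₄ ω) μ := by
  have : ENNReal.HolderTriple 4 4 2 := ⟨by
    rw [show (4 : ℝ≥0∞) = 2 * 2 by norm_num, ENNReal.mul_inv (by simp) (by simp), ← mul_add,
      ENNReal.inv_two_add_inv_two, mul_one]⟩
  have h₁₂ : MemLp (fun ω => f₁ ω * f₂ ω) 2 μ := h₂.mul' h₁
  have h₃₄ : MemLp (fun ω => f₃ ω * f₄ ω) 2 μ := h₄.mul' h₃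
  have h : MemLp (fun ω => f₁ ω * f₂ ω * (f₃ ω * f₄ ω)) 1 μ := h₃₄.mul' h₁₂
  simpa only [← mul_assoc, memLp_one_iff_integrable] using h

theorem integral_sum_mul_pow_four [Fintype ι] (X : Ω → ι → ℝ) (hX : ∀ i, MemLp (X · i) 4 μ)
    (α : ι → ℂ) :
    ∫ ω, (∑ i, α i * (X ω i : ℂ)) ^ 4 ∂μ
      = ∑ i, ∑ j, ∑ k, ∑ l, α i * α j * α k * α l
          * ((∫ ω, X ω i * X ω j * X ω k * X ω l ∂μ : ℝ) : ℂ) := by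
  have hint : ∀ i j k l, Integrable
      (fun ω => α i * α j * α k * α l * ((X ω i * X ω j * X ω k * X ω l : ℝ) : ℂ)) μ :=
    fun i j k l =>
      ((integrable_mul_mul_mul_of_memLp_four (hX i) (hX j) (hX k) (hX l)).ofReal).const_mul _
  have hexpand : ∀ ω, (∑ i, α i * (X ω i : ℂ)) ^ 4
      = ∑ i, ∑ j, ∑ k, ∑ l, α i * α j * α k * α l * ((X ω i * X ω j * X ω k * X ω l : ℝ) : ℂ) := by
    intro ω
    simp only [pow_succ, pow_zero, one_mul, sum_mul, mul_sum]
    push_cast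
    exact sum_congr rfl fun _ _ => sum_congr rfl fun _ _ => sum_congr rfl fun _ _ =>
      sum_congr rfl fun _ _ => by ring
  simp only [hexpand]
  -- `fun_prop` closes the integrability side conditions from `hint`
  simp (disch := intro _ _; fun_prop) only [integral_finsetSum, integral_const_mul,
    integral_complex_ofReal]

theorem integral_comp_perm_eq_of_map_eq {X : Ω → ι → ℝ} (hX : AEMeasurable X μ) (σ : Perm ι)
    (hσ : μ.map (fun ω => X ω ∘ σ) = μ.map X) {g : (ι → ℝ) → ℝ} (hg : Measurable g) :
    ∫ ω, g (X ω ∘ σ) ∂μ = ∫ ω, g (X ω) ∂μ :=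
  have hXσ : AEMeasurable (fun ω => X ω ∘ σ) μ :=
    (measurable_pi_lambda _ fun a => measurable_pi_apply (σ a)).comp_aemeasurable hX
  (IdentDistrib.comp ⟨hXσ, hX, hσ⟩ hg).integral_eq

theorem isExchangeableTensor_integral_mul_mul_mul {X : Ω → ι → ℝ} (hX : AEMeasurable X μ)
    (hexch : ∀ σ : Perm ι, μ.map (fun ω => X ω ∘ σ) = μ.map X) :
    IsExchangeableTensor fun i j k l => ∫ ω, X ω i * X ω j * X ω k * X ω l ∂μ where
  perm_apply σ i j k l :=
    integral_comp_perm_eq_of_map_eq hX σ (hexch σ) (g := fun v => v i * v j * v k * v l)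
      (by fun_prop)
  swap₁₂ i j k l := by congr 1 with ω; ring
  swap₂₃ i j k l := by congr 1 with ω; ring
  swap₃₄ i j k l := by congr 1 with ω; ring

end Moments

/-- Fourth moment of a zero-sum linear combination of exchangeable random variables:
for `(X₁,…,Xₙ)` exchangeable with finite fourth moments (`n ≥ 4`) and complex numbers
`α₁,…,αₙ` summing to zero,
`E[(∑ αᵢ Xᵢ)⁴] = sum₄(α)(E[X₁⁴] − 4E[X₁³X₂] + 6E[X₁²X₂X₃] − 3E[X₁X₂X₃X₄])
  + sum₂₂(α)(3E[X₁²X₂²] − 6E[X₁²X₂X₃] + 3E[X₁X₂X₃X₄])`. -/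
theorem exchangeable_fourth_moment
    {Ω : Type*} [MeasureSpace Ω]
    (n : ℕ) (hn : 4 ≤ n) (X : Ω → Fin n → ℝ)
    (hL4 : ∀ i, MemLp (fun ω => X ω i) 4 (volume : Measure Ω))
    (hexch : ∀ σ : Equiv.Perm (Fin n),
      Measure.map (fun ω => X ω ∘ σ) (volume : Measure Ω)
        = Measure.map X (volume : Measure Ω))
    (α : Fin n → ℂ) (hα : ∑ i, α i = 0) :
    (∫ ω, (∑ i, α i * (X ω i : ℂ)) ^ 4)
      = (∑ i, (α i) ^ 4) *
          (((∫ ω, (X ω ⟨0, by omega⟩) ^ 4 : ℝ) : ℂ)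
            - 4 * ((∫ ω, (X ω ⟨0, by omega⟩) ^ 3 * X ω ⟨1, by omega⟩ : ℝ) : ℂ)
            + 6 * ((∫ ω, (X ω ⟨0, by omega⟩) ^ 2 * X ω ⟨1, by omega⟩ * X ω ⟨2, by omega⟩ : ℝ) : ℂ)
            - 3 * ((∫ ω, X ω ⟨0, by omega⟩ * X ω ⟨1, by omega⟩ * X ω ⟨2, by omega⟩
                * X ω ⟨3, by omega⟩ : ℝ) : ℂ))
        + (∑ i, ∑ j ∈ Finset.univ.erase i, (α i) ^ 2 * (α j) ^ 2) *
          (3 * ((∫ ω, (X ω ⟨0, by omega⟩) ^ 2 * (X ω ⟨1, by omega⟩) ^ 2 : ℝ) : ℂ)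
            - 6 * ((∫ ω, (X ω ⟨0, by omega⟩) ^ 2 * X ω ⟨1, by omega⟩ * X ω ⟨2, by omega⟩ : ℝ) : ℂ)
            + 3 * ((∫ ω, X ω ⟨0, by omega⟩ * X ω ⟨1, by omega⟩ * X ω ⟨2, by omega⟩
                * X ω ⟨3, by omega⟩ : ℝ) : ℂ)) := by
  have hX : AEMeasurable X := aemeasurable_pi_lambda _ fun i => (hL4 i).1.aemeasurable
  have hf := (isExchangeableTensor_integral_mul_mul_mul hX hexch).comp ((↑) : ℝ → ℂ)
  rw [integral_sum_mul_pow_four X hL4 α, hf.sum_mul_eq (Fin.castLEEmb hn) α hα]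
  simp only [pow_succ, pow_zero, one_mul, ← mul_assoc]
  -- the two sides now differ only in writing `Fin.castLEEmb hn m` for `⟨m, _⟩`
  rfl
end

section
/- Let K > 0, γ > −1, κ ≥ 0, and let g : (0,∞) → ℂ be a measurable function with |g(y)| ≤ K·y^γ for 0 < y ≤ 1 and |g(y)| ≤ K·y^κ for y > 1. Then there exists δ₀ > 0, depending only on K, γ, κ, such that for every δ ≥ δ₀ the following holds: if Δ : (0,∞) → ℂ is a measurable function such that I₁ := ∫₀^∞ y^γ e^{−δy} |Δ(y)| dy < ∞ and I₂ := ∫₀^∞ y^κ e^{−δy} |Δ(y)| dy < ∞, and such that |Δ(t)| ≤ t·∫₀^∞ |g(ty)| e^{−δy} |Δ(y)| dy for all t > 0, then Δ(t) = 0 for all t > 0. -/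
/-!
Since `‖g x‖ ≤ K (x^γ + x^κ)`, the hypothesis gives the pointwise bound
`‖Δ t‖ ≤ K (I_γ t^{1+γ} + I_κ t^{1+κ})` in terms of the two weighted moments `I_γ, I_κ` of `‖Δ‖`.
Integrating it back against `y^α e^{-δy}` for `α = γ, κ` bounds each moment by a combination of
both, with coefficients `K ∫₀^∞ y^s e^{-δy} dy = K Γ(s+1) δ^{-(s+1)}`, which tend to `0` as
`δ → ∞`. For large `δ` this linear system of inequalities forces `I_γ = I_κ = 0`, and then the
pointwise bound forces `Δ = 0`.
-/

open MeasureTheory Filter Set Topology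

noncomputable def expMoment (δ α : ℝ) (u : ℝ → ℝ) : ℝ :=
  ∫ y in Ioi (0 : ℝ), y ^ α * Real.exp (-δ * y) * u y

lemma expMoment_one (δ s : ℝ) :
    expMoment δ s 1 = ∫ y in Ioi (0 : ℝ), y ^ s * Real.exp (-δ * y) := by
  simp only [expMoment, Pi.one_apply, mul_one]

lemma expMoment_nonneg {δ α : ℝ} {u : ℝ → ℝ} (hu : ∀ y, 0 < y → 0 ≤ u y) :
    0 ≤ expMoment δ α u :=
  setIntegral_nonneg measurableSet_Ioi fun y (hy : 0 < y) =>
    mul_nonneg (mul_nonneg (Real.rpow_nonneg hy.le _) (Real.exp_pos _).le) (hu y hy)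

lemma integrableOn_rpow_mul_exp_neg_mul {s δ : ℝ} (hs : -1 < s) (hδ : 0 < δ) :
    IntegrableOn (fun y : ℝ => y ^ s * Real.exp (-δ * y)) (Ioi 0) := by
  simpa only [Real.rpow_one] using integrableOn_rpow_mul_exp_neg_mul_rpow hs one_pos hδ

lemma expMoment_one_eq_Gamma {δ s : ℝ} (hs : -1 < s) (hδ : 0 < δ) :
    expMoment δ s 1 = Real.Gamma (s + 1) * δ ^ (-(s + 1)) := by
  have h := Real.integral_rpow_mul_exp_neg_mul_Ioi (a := s + 1) (by linarith) hδ
  rw [add_sub_cancel_right, one_div, Real.inv_rpow hδ.le, ← Real.rpow_neg hδ.le] at h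
  simpa only [expMoment_one, neg_mul, mul_comm (Real.Gamma _)] using h

lemma tendsto_expMoment_one_atTop {s : ℝ} (hs : -1 < s) :
    Tendsto (fun δ => expMoment δ s 1) atTop (𝓝 0) := by
  have h := (tendsto_rpow_neg_atTop (y := s + 1) (by linarith)).const_mul (Real.Gamma (s + 1))
  rw [mul_zero] at h
  exact h.congr' <| (eventually_gt_atTop 0).mono fun δ hδ => (expMoment_one_eq_Gamma hs hδ).symm

lemma eventually_mul_expMoment_add_mul_expMoment_lt_one (K : ℝ) {s s' : ℝ} (hs : -1 < s)
    (hs' : -1 < s') :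
    ∀ᶠ δ in atTop, K * expMoment δ s 1 + K * expMoment δ s' 1 < 1 := by
  have h := ((tendsto_expMoment_one_atTop hs).const_mul K).add
    ((tendsto_expMoment_one_atTop hs').const_mul K)
  rw [mul_zero, add_zero] at h
  exact h.eventually_lt_const one_pos

lemma le_mul_rpow_add_mul_rpow {f : ℝ → ℝ} {K a b x : ℝ} (hK : 0 ≤ K)
    (h₁ : ∀ y, 0 < y → y ≤ 1 → f y ≤ K * y ^ a) (h₂ : ∀ y, 1 < y → f y ≤ K * y ^ b)
    (hx : 0 < x) : f x ≤ K * x ^ a + K * x ^ b := by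
  rcases le_or_gt x 1 with hx1 | hx1
  · linarith [h₁ x hx hx1, mul_nonneg hK (Real.rpow_nonneg hx.le b)]
  · linarith [h₂ x hx1, mul_nonneg hK (Real.rpow_nonneg hx.le a)]

lemma mul_integral_comp_mul_le {h u : ℝ → ℝ} {A B a b δ t : ℝ} (ht : 0 < t)
    (hh₀ : ∀ x, 0 < x → 0 ≤ h x) (hh : ∀ x, 0 < x → h x ≤ A * x ^ a + B * x ^ b)
    (hu : ∀ y, 0 < y → 0 ≤ u y)
    (ha : IntegrableOn (fun y => y ^ a * Real.exp (-δ * y) * u y) (Ioi 0))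
    (hb : IntegrableOn (fun y => y ^ b * Real.exp (-δ * y) * u y) (Ioi 0)) :
    t * ∫ y in Ioi (0 : ℝ), h (t * y) * Real.exp (-δ * y) * u y
      ≤ A * expMoment δ a u * t ^ (1 + a) + B * expMoment δ b u * t ^ (1 + b) := by
  have hpt : ∀ y ∈ Ioi (0 : ℝ), h (t * y) * Real.exp (-δ * y) * u y
      ≤ A * t ^ a * (y ^ a * Real.exp (-δ * y) * u y)
        + B * t ^ b * (y ^ b * Real.exp (-δ * y) * u y) := by
    intro y (hy : 0 < y)
    have hw : 0 ≤ Real.exp (-δ * y) * u y := mul_nonneg (Real.exp_pos _).le (hu y hy)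
    calc h (t * y) * Real.exp (-δ * y) * u y
        = h (t * y) * (Real.exp (-δ * y) * u y) := mul_assoc _ _ _
      _ ≤ (A * (t * y) ^ a + B * (t * y) ^ b) * (Real.exp (-δ * y) * u y) :=
        mul_le_mul_of_nonneg_right (hh _ (mul_pos ht hy)) hw
      _ = _ := by rw [Real.mul_rpow ht.le hy.le, Real.mul_rpow ht.le hy.le]; ring
  have hint := setIntegral_mono_of_nonneg
    (fun y (hy : y ∈ Ioi 0) => mul_nonneg (mul_nonneg (hh₀ _ (mul_pos ht hy)) (Real.exp_pos _).le)
      (hu y hy)) hpt ((ha.const_mul _).add (hb.const_mul _))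
  rw [integral_add (ha.const_mul _) (hb.const_mul _), integral_const_mul,
    integral_const_mul] at hint
  calc t * ∫ y in Ioi (0 : ℝ), h (t * y) * Real.exp (-δ * y) * u y
      ≤ t * (A * t ^ a * expMoment δ a u + B * t ^ b * expMoment δ b u) :=
        mul_le_mul_of_nonneg_left hint ht.le
    _ = _ := by simp only [Real.rpow_add ht, Real.rpow_one]; ring

lemma expMoment_le_of_le_mul_rpow_add_mul_rpow {u : ℝ → ℝ} {A B p q α δ : ℝ} (hδ : 0 < δ)
    (hp : -1 < α + p) (hq : -1 < α + q) (hu : ∀ t, 0 < t → 0 ≤ u t)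
    (hub : ∀ t, 0 < t → u t ≤ A * t ^ p + B * t ^ q) :
    expMoment δ α u ≤ A * expMoment δ (α + p) 1 + B * expMoment δ (α + q) 1 := by
  have hip := integrableOn_rpow_mul_exp_neg_mul hp hδ
  have hiq := integrableOn_rpow_mul_exp_neg_mul hq hδ
  have hpt : ∀ t ∈ Ioi (0 : ℝ), t ^ α * Real.exp (-δ * t) * u t
      ≤ A * (t ^ (α + p) * Real.exp (-δ * t)) + B * (t ^ (α + q) * Real.exp (-δ * t)) := by
    intro t (ht : 0 < t)
    calc t ^ α * Real.exp (-δ * t) * u t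
        ≤ t ^ α * Real.exp (-δ * t) * (A * t ^ p + B * t ^ q) :=
          mul_le_mul_of_nonneg_left (hub t ht)
            (mul_nonneg (Real.rpow_nonneg ht.le _) (Real.exp_pos _).le)
      _ = _ := by rw [Real.rpow_add ht, Real.rpow_add ht]; ring
  have hint := setIntegral_mono_of_nonneg
    (fun t (ht : t ∈ Ioi 0) =>
      mul_nonneg (mul_nonneg (Real.rpow_nonneg (le_of_lt ht) _) (Real.exp_pos _).le) (hu t ht)) hpt
    ((hip.const_mul _).add (hiq.const_mul _))
  rwa [integral_add (hip.const_mul _) (hiq.const_mul _), integral_const_mul,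
    integral_const_mul, ← expMoment_one, ← expMoment_one] at hint

lemma eq_zero_of_le_mul_add_mul {x y a b c d : ℝ} (hx : 0 ≤ x) (hy : 0 ≤ y)
    (hx' : x ≤ a * x + b * y) (hy' : y ≤ c * x + d * y) (hac : a + c < 1) (hbd : b + d < 1) :
    x = 0 ∧ y = 0 := by
  have h₁ : 0 ≤ (1 - (a + c)) * x := mul_nonneg (by linarith) hx
  have h₂ : 0 ≤ (1 - (b + d)) * y := mul_nonneg (by linarith) hy
  have hx0 : (1 - (a + c)) * x = 0 := by linarith
  have hy0 : (1 - (b + d)) * y = 0 := by linarith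
  exact ⟨(mul_eq_zero.mp hx0).resolve_left (by linarith),
    (mul_eq_zero.mp hy0).resolve_left (by linarith)⟩

theorem contraction_uniqueness_general
    (K γ κ : ℝ) (hK : 0 < K) (hγ : -1 < γ) (hκ : 0 ≤ κ)
    (g : ℝ → ℂ)
    (hg1 : ∀ y : ℝ, 0 < y → y ≤ 1 → ‖g y‖ ≤ K * y ^ γ)
    (hg2 : ∀ y : ℝ, 1 < y → ‖g y‖ ≤ K * y ^ κ) :
    ∃ δ₀ : ℝ, 0 < δ₀ ∧ ∀ δ : ℝ, δ₀ ≤ δ →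
      ∀ Δ : ℝ → ℂ, Measurable Δ →
        IntegrableOn (fun y : ℝ => y ^ γ * Real.exp (-δ * y) * ‖Δ y‖)
          (Set.Ioi (0 : ℝ)) →
        IntegrableOn (fun y : ℝ => y ^ κ * Real.exp (-δ * y) * ‖Δ y‖)
          (Set.Ioi (0 : ℝ)) →
        (∀ t : ℝ, 0 < t →
          ‖Δ t‖
            ≤ t * ∫ y in Set.Ioi (0 : ℝ),
                ‖g (t * y)‖ * Real.exp (-δ * y) * ‖Δ y‖) →
        ∀ t : ℝ, 0 < t → Δ t = 0 := by
  obtain ⟨δ₀, hδ₀⟩ :=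
    ((eventually_mul_expMoment_add_mul_expMoment_lt_one K (s := γ + (1 + γ)) (s' := κ + (1 + γ))
      (by linarith) (by linarith)).and
    ((eventually_mul_expMoment_add_mul_expMoment_lt_one K (s := γ + (1 + κ)) (s' := κ + (1 + κ))
      (by linarith) (by linarith)).and (eventually_gt_atTop 0))).exists_forall_of_atTop
  refine ⟨max δ₀ 1, by positivity, fun δ hδ Δ _ hIγ hIκ hΔ => ?_⟩
  obtain ⟨hcγ, hcκ, hδpos⟩ := hδ₀ δ (le_of_max_le_left hδ)
  have hu : ∀ y : ℝ, 0 < y → 0 ≤ ‖Δ y‖ := fun y _ => norm_nonneg _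
  set Iγ := expMoment δ γ (‖Δ ·‖)
  set Iκ := expMoment δ κ (‖Δ ·‖)
  have hpt : ∀ t : ℝ, 0 < t → ‖Δ t‖ ≤ K * Iγ * t ^ (1 + γ) + K * Iκ * t ^ (1 + κ) :=
    fun t ht => (hΔ t ht).trans <| mul_integral_comp_mul_le ht (fun _ _ => norm_nonneg _)
      (fun _ hx => le_mul_rpow_add_mul_rpow hK.le hg1 hg2 hx) hu hIγ hIκ
  have hBγ := expMoment_le_of_le_mul_rpow_add_mul_rpow (α := γ) hδpos (by linarith)
    (by linarith) hu hpt
  have hBκ := expMoment_le_of_le_mul_rpow_add_mul_rpow (α := κ) hδpos (by linarith)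
    (by linarith) hu hpt
  obtain ⟨hγ0, hκ0⟩ := eq_zero_of_le_mul_add_mul (x := Iγ) (y := Iκ) (expMoment_nonneg hu)
    (expMoment_nonneg hu) (by linarith) (by linarith) hcγ hcκ
  intro t ht
  simpa [hγ0, hκ0] using hpt t ht

/-- Contraction estimate: if `|g(y)| ≤ K y^γ` on `(0,1]` and `|g(y)| ≤ K y^κ` on `(1,∞)`
(with `K > 0`, `γ > −1`, `κ ≥ 0`), then there is `δ₀ > 0` depending only on `K, γ, κ` such
that for `δ ≥ δ₀`, any measurable `Δ : (0,∞) → ℂ` with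
`∫₀^∞ y^γ e^{−δy}|Δ(y)| dy < ∞`, `∫₀^∞ y^κ e^{−δy}|Δ(y)| dy < ∞` and
`|Δ(t)| ≤ t ∫₀^∞ |g(ty)| e^{−δy} |Δ(y)| dy` for all `t > 0` vanishes identically on
`(0,∞)`. -/
theorem contraction_uniqueness
    (K γ κ : ℝ) (hK : 0 < K) (hγ : -1 < γ) (hκ : 0 ≤ κ)
    (g : ℝ → ℂ) (hg_meas : Measurable g)
    (hg1 : ∀ y : ℝ, 0 < y → y ≤ 1 → ‖g y‖ ≤ K * y ^ γ)
    (hg2 : ∀ y : ℝ, 1 < y → ‖g y‖ ≤ K * y ^ κ) :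
    ∃ δ₀ : ℝ, 0 < δ₀ ∧ ∀ δ : ℝ, δ₀ ≤ δ →
      ∀ Δ : ℝ → ℂ, Measurable Δ →
        IntegrableOn (fun y : ℝ => y ^ γ * Real.exp (-δ * y) * ‖Δ y‖)
          (Set.Ioi (0 : ℝ)) →
        IntegrableOn (fun y : ℝ => y ^ κ * Real.exp (-δ * y) * ‖Δ y‖)
          (Set.Ioi (0 : ℝ)) →
        (∀ t : ℝ, 0 < t →
          ‖Δ t‖
            ≤ t * ∫ y in Set.Ioi (0 : ℝ),
                ‖g (t * y)‖ * Real.exp (-δ * y) * ‖Δ y‖) →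
        ∀ t : ℝ, 0 < t → Δ t = 0 :=
  contraction_uniqueness_general K γ κ hK hγ hκ g hg1 hg2
end

section
/- Let α ∈ (0,2) and β ∈ (α/2, 1]. Then there exists a constant c = c(α, β) > 0 such that for all nonzero x, y ∈ ℂ with Im x ≤ 0 and Im y ≤ 0, |x^{α/2} − y^{α/2}| ≤ c·|x − y|^β·(min(|x|, |y|))^{α/2 − β}. -/
/-!
With `γ = α / 2`, conjugation turns the claim into a Hölder bound for the principal power
`z ↦ z ^ γ` on the closed upper half-plane. Put `d = ‖a - b‖` and `m = min ‖a‖ ‖b‖`. If `m ≤ 2d`,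
then `‖a‖, ‖b‖ ≤ 3d` and the trivial bound `‖a‖ ^ γ + ‖b‖ ^ γ ≤ 2 (3d) ^ γ` suffices; if `2d < m`,
the segment `[a, b]` stays at distance `≥ m / 2` from `0`, and the mean value theorem with
`‖γ z ^ (γ - 1)‖ ≤ γ (m / 2) ^ (γ - 1)` applies. Since `γ ≤ β ≤ 1`, both bounds are
`≲ d ^ β (m / 2) ^ (γ - β)`. The mean value theorem needs the segment inside the slit plane, so
points of the negative real axis are reached as limits of `a + εi`, `b + εi`, along which `z ^ γ`
is continuous from above.
-/

open Complex ComplexConjugate Filter Set Topology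

namespace Complex

theorem continuousWithinAt_cpow_const_of_nonneg_im (s : ℂ) {a : ℂ} (ha : a ≠ 0) :
    ContinuousWithinAt (· ^ s) {z : ℂ | 0 ≤ z.im} a := by
  by_cases hslit : a ∈ slitPlane
  · exact (continuousAt_cpow_const hslit).continuousWithinAt
  obtain ⟨hre, him⟩ : a.re ≤ 0 ∧ a.im = 0 := by simpa [mem_slitPlane_iff] using hslit
  have hre : a.re < 0 := hre.lt_of_ne fun h ↦ ha (Complex.ext h him)
  refine (((continuousWithinAt_log_of_re_neg_of_im_zero hre him).mul
    continuousWithinAt_const).cexp).congr_of_eventuallyEq ?_ (cpow_def_of_ne_zero ha s)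
  filter_upwards [eventually_ne_nhdsWithin ha] with z hz using cpow_def_of_ne_zero hz s

theorem tendsto_add_mul_I_nhdsGT_zero {a : ℂ} (ha : 0 ≤ a.im) :
    Tendsto (fun ε : ℝ ↦ a + ε * I) (𝓝[>] 0) (𝓝[{z : ℂ | 0 < z.im}] a) := by
  refine tendsto_nhdsWithin_iff.mpr ⟨?_, ?_⟩
  · exact ((show Continuous (fun ε : ℝ ↦ a + ε * I) by fun_prop).tendsto' 0 a
      (by simp)).mono_left nhdsWithin_le_nhds
  · filter_upwards [self_mem_nhdsWithin] with ε (hε : 0 < ε)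
    simpa using add_pos_of_nonneg_of_pos ha hε

section Holder

variable {γ β : ℝ} {a b : ℂ}

theorem norm_cpow_sub_cpow_le_of_min_le (hγ : 0 ≤ γ) (hγβ : γ ≤ β) (ha : a ≠ 0) (hb : b ≠ 0)
    (h : min ‖a‖ ‖b‖ ≤ 2 * ‖a - b‖) :
    ‖a ^ (γ : ℂ) - b ^ (γ : ℂ)‖ ≤ 2 * 3 ^ γ * ‖a - b‖ ^ β * (min ‖a‖ ‖b‖ / 2) ^ (γ - β) := by
  set d := ‖a - b‖
  set m := min ‖a‖ ‖b‖
  have hm : 0 < m := lt_min (norm_pos_iff.mpr ha) (norm_pos_iff.mpr hb)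
  have hd : 0 < d := by linarith
  obtain ⟨ha3, hb3⟩ : ‖a‖ ≤ 3 * d ∧ ‖b‖ ≤ 3 * d := by
    rcases min_le_iff.mp h with h | h <;> constructor <;>
      linarith [norm_le_norm_add_norm_sub' a b, norm_le_norm_add_norm_sub a b]
  calc ‖a ^ (γ : ℂ) - b ^ (γ : ℂ)‖ ≤ ‖a‖ ^ γ + ‖b‖ ^ γ := by
        simpa only [norm_cpow_real] using norm_sub_le (a ^ (γ : ℂ)) (b ^ (γ : ℂ))
    _ ≤ (3 * d) ^ γ + (3 * d) ^ γ := by gcongr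
    _ = 2 * 3 ^ γ * d ^ β * d ^ (γ - β) := by
        rw [Real.mul_rpow (by norm_num) hd.le, mul_assoc _ (d ^ β), ← Real.rpow_add hd]
        ring_nf
    _ ≤ 2 * 3 ^ γ * d ^ β * (m / 2) ^ (γ - β) := mul_le_mul_of_nonneg_left
        (Real.rpow_le_rpow_of_nonpos (half_pos hm) (by linarith) (by linarith)) (by positivity)

theorem norm_cpow_sub_cpow_le_of_two_mul_lt (hγ0 : 0 ≤ γ) (hγ1 : γ ≤ 1) (hβ : β ≤ 1)
    (hab : segment ℝ a b ⊆ slitPlane) (h : 2 * ‖a - b‖ < min ‖a‖ ‖b‖) :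
    ‖a ^ (γ : ℂ) - b ^ (γ : ℂ)‖ ≤ γ * ‖a - b‖ ^ β * (min ‖a‖ ‖b‖ / 2) ^ (γ - β) := by
  set d := ‖a - b‖
  set m := min ‖a‖ ‖b‖
  have hm : 0 < m := (mul_nonneg zero_le_two (norm_nonneg _)).trans_lt h
  have hseg : ∀ z ∈ segment ℝ a b, m / 2 ≤ ‖z‖ := fun z hz ↦ by
    have hza : ‖a - z‖ ≤ d := calc
      ‖a - z‖ = ‖z - a‖ := norm_sub_rev a z
      _ ≤ ‖b - a‖ := norm_sub_le_of_mem_segment hz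
      _ = d := norm_sub_rev b a
    linarith [norm_le_norm_add_norm_sub' a z, min_le_left ‖a‖ ‖b‖]
  have hderiv : ∀ z ∈ segment ℝ a b,
      HasDerivWithinAt (· ^ (γ : ℂ)) ((γ : ℂ) * z ^ ((γ : ℂ) - 1)) (segment ℝ a b) z :=
    fun z hz ↦ (hasStrictDerivAt_cpow_const (hab hz)).hasDerivAt.hasDerivWithinAt
  have hbound : ∀ z ∈ segment ℝ a b, ‖(γ : ℂ) * z ^ ((γ : ℂ) - 1)‖ ≤ γ * (m / 2) ^ (γ - 1) :=
    fun z hz ↦ by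
      rw [norm_mul, norm_real, Real.norm_of_nonneg hγ0, show (γ : ℂ) - 1 = ((γ - 1 : ℝ) : ℂ)
        by push_cast; ring, norm_cpow_real]
      exact mul_le_mul_of_nonneg_left
        (Real.rpow_le_rpow_of_nonpos (half_pos hm) (hseg z hz) (by linarith)) hγ0
  calc ‖a ^ (γ : ℂ) - b ^ (γ : ℂ)‖ ≤ γ * (m / 2) ^ (γ - 1) * (d ^ β * d ^ (1 - β)) := by
        rw [← Real.rpow_add' (norm_nonneg _) (by norm_num), add_sub_cancel, Real.rpow_one]
        exact (convex_segment a b).norm_image_sub_le_of_norm_hasDerivWithin_le hderiv hbound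
          (right_mem_segment ℝ a b) (left_mem_segment ℝ a b)
    _ ≤ γ * (m / 2) ^ (γ - 1) * (d ^ β * (m / 2) ^ (1 - β)) := by
        gcongr
        linarith
    _ = γ * d ^ β * (m / 2) ^ (γ - β) := by
        rw [show γ - β = (γ - 1) + (1 - β) by ring, Real.rpow_add (half_pos hm)]
        ring

theorem norm_cpow_sub_cpow_le (hγ0 : 0 ≤ γ) (hγ1 : γ ≤ 1) (hγβ : γ ≤ β) (hβ : β ≤ 1)
    (hab : segment ℝ a b ⊆ slitPlane) :
    ‖a ^ (γ : ℂ) - b ^ (γ : ℂ)‖ ≤ 2 * 3 ^ γ * ‖a - b‖ ^ β * (min ‖a‖ ‖b‖ / 2) ^ (γ - β) := by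
  rcases le_or_gt (min ‖a‖ ‖b‖) (2 * ‖a - b‖) with h | h
  · exact norm_cpow_sub_cpow_le_of_min_le hγ0 hγβ
      (slitPlane_ne_zero (hab (left_mem_segment ℝ a b)))
      (slitPlane_ne_zero (hab (right_mem_segment ℝ a b))) h
  · refine (norm_cpow_sub_cpow_le_of_two_mul_lt hγ0 hγ1 hβ hab h).trans ?_
    have : γ ≤ 2 * 3 ^ γ := by
      linarith [Real.one_le_rpow (by norm_num : (1 : ℝ) ≤ 3) hγ0]
    gcongr

theorem norm_cpow_sub_cpow_le_of_nonneg_im (hγ0 : 0 ≤ γ) (hγ1 : γ ≤ 1) (hγβ : γ ≤ β)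
    (hβ : β ≤ 1) (ha : a ≠ 0) (hb : b ≠ 0) (ha' : 0 ≤ a.im) (hb' : 0 ≤ b.im) :
    ‖a ^ (γ : ℂ) - b ^ (γ : ℂ)‖ ≤ 2 * 3 ^ γ * ‖a - b‖ ^ β * (min ‖a‖ ‖b‖ / 2) ^ (γ - β) := by
  have hcpow {z : ℂ} (hz : z ≠ 0) (hz' : 0 ≤ z.im) :
      Tendsto (fun ε : ℝ ↦ (z + ε * I) ^ (γ : ℂ)) (𝓝[>] 0) (𝓝 (z ^ (γ : ℂ))) :=
    ((continuousWithinAt_cpow_const_of_nonneg_im _ hz).mono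
      (ofPred_subset_ofPred.mpr fun _ ↦ le_of_lt)).tendsto.comp
      (tendsto_add_mul_I_nhdsGT_zero hz')
  have hbound : Tendsto
      (fun ε : ℝ ↦ 2 * 3 ^ γ * ‖a - b‖ ^ β * (min ‖a + ε * I‖ ‖b + ε * I‖ / 2) ^ (γ - β))
      (𝓝[>] 0) (𝓝 (2 * 3 ^ γ * ‖a - b‖ ^ β * (min ‖a‖ ‖b‖ / 2) ^ (γ - β))) := by
    have hm : min ‖a‖ ‖b‖ / 2 ≠ 0 := by positivity
    have hmin : Continuous fun ε : ℝ ↦ min ‖a + ε * I‖ ‖b + ε * I‖ / 2 := by fun_prop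
    have := (hmin.continuousAt (x := 0)).rpow_const (p := γ - β) (.inl (by simpa using hm))
    simpa using (this.tendsto.mono_left nhdsWithin_le_nhds).const_mul (2 * 3 ^ γ * ‖a - b‖ ^ β)
  refine le_of_tendsto_of_tendsto ((hcpow ha ha').sub (hcpow hb hb')).norm hbound ?_
  filter_upwards [(tendsto_nhdsWithin_iff.mp (tendsto_add_mul_I_nhdsGT_zero ha')).2,
    (tendsto_nhdsWithin_iff.mp (tendsto_add_mul_I_nhdsGT_zero hb')).2] with ε hεa hεb
  have hseg := (convex_halfSpace_im_gt 0).segment_subset hεa hεb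
  have := norm_cpow_sub_cpow_le hγ0 hγ1 hγβ hβ
    (hseg.trans fun _ hw ↦ mem_slitPlane_iff.mpr (Or.inr (ne_of_gt hw)))
  rwa [add_sub_add_right_eq_sub] at this

end Holder

end Complex

/-- Hölder-type estimate for the power function `z ↦ z^{α/2}` on the closed lower half-plane
(branch continuous from the lower half-plane, i.e. `x ↦ conj((conj x)^{α/2})`):
for `α ∈ (0,2)` and `β ∈ (α/2, 1]` there is `c > 0` such that for all nonzero `x, y` with
`Im x ≤ 0`, `Im y ≤ 0`,
`|x^{α/2} − y^{α/2}| ≤ c |x − y|^β (min(|x|,|y|))^{α/2−β}`. -/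
theorem cpow_holder_lower_half_plane
    (α β : ℝ) (hα : α ∈ Set.Ioo (0 : ℝ) 2) (hβ : β ∈ Set.Ioc (α / 2) 1) :
    ∃ c : ℝ, 0 < c ∧ ∀ x y : ℂ, x ≠ 0 → y ≠ 0 → x.im ≤ 0 → y.im ≤ 0 →
      ‖((starRingEnd ℂ) (((starRingEnd ℂ) x) ^ ((α / 2 : ℝ) : ℂ))
            - (starRingEnd ℂ) (((starRingEnd ℂ) y) ^ ((α / 2 : ℝ) : ℂ)))‖
        ≤ c * ‖x - y‖ ^ β
            * min ‖x‖ ‖y‖ ^ (α / 2 - β) := by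
  obtain ⟨hα0, hα2⟩ := hα
  obtain ⟨hαβ, hβ1⟩ := hβ
  refine ⟨2 * 3 ^ (α / 2) * 2 ^ (β - α / 2), by positivity, fun x y hx hy hxim hyim ↦ ?_⟩
  have key := norm_cpow_sub_cpow_le_of_nonneg_im (γ := α / 2) (a := conj x) (b := conj y)
    (by linarith) (by linarith) hαβ.le hβ1 ((map_ne_zero _).mpr hx) ((map_ne_zero _).mpr hy)
    (by simpa using hxim) (by simpa using hyim)
  have hhalf : (min ‖x‖ ‖y‖ / 2) ^ (α / 2 - β) = min ‖x‖ ‖y‖ ^ (α / 2 - β) * 2 ^ (β - α / 2) := by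
    rw [Real.div_rpow (by positivity) zero_le_two, div_eq_mul_inv, ← Real.rpow_neg zero_le_two,
      neg_sub]
  rw [← map_sub, norm_conj]
  rw [← map_sub, norm_conj, norm_conj, norm_conj, hhalf] at key
  linarith
end
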